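/- arXiv:2601.08268 — 3 statements merged into one kernel-verified Lean document; each statement's English description precedes it below -/
import Mathlib

section
/- Let n be a positive integer and let ρ and σ be n×n positive definite complex matrices with trace 1. For every n×n unitary matrix U one has Tr(ρ² (U*σU)⁻¹) ≥ Σ_{i=1}^n λ↓ᵢ(ρ)² / λ↓ᵢ(σ), and equality holds for U = W↓ V↓*. Consequently the minimum of U ↦ Tr(ρ² (U*σU)⁻¹) over the unitary group is Σ_{i=1}^n λ↓ᵢ(ρ)² / λ↓ᵢ(σ) and it is attained at W↓ V↓*. -/
/-!
Diagonalize `ρ = V diag(r) Vᴴ` and `σ = W diag(d) Wᴴ`. For a unitary `U`, with `Q = Vᴴ Uᴴ W`,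
`Tr(ρ² (Uᴴ σ U)⁻¹) = Σ_{i,j} r_i² |Q_ij|² / d_j`. The matrix `(|Q_ij|²)` is doubly stochastic, so
by Birkhoff's theorem this is a convex combination of the sums `Σ_i r_i² / d_{π i}` over
permutations `π`; since `r²` is decreasing and `1/d` increasing, the rearrangement inequality
bounds each of these below by `Σ_i r_i² / d_i`. The choice `U = W Vᴴ` makes `Q = 1`.
-/

open Matrix
open scoped ComplexOrder

namespace Matrix

variable {ι : Type*} [Fintype ι]

section Unitary

variable [DecidableEq ι] {α : Type*} [CommRing α] [StarRing α] {U : Matrix ι ι α}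

theorem conjTranspose_mem_unitaryGroup (hU : U ∈ unitaryGroup ι α) : Uᴴ ∈ unitaryGroup ι α :=
  Unitary.star_mem hU

theorem conjTranspose_mul_self_of_mem_unitaryGroup (hU : U ∈ unitaryGroup ι α) : Uᴴ * U = 1 :=
  mem_unitaryGroup_iff'.1 hU

theorem mul_conjTranspose_self_of_mem_unitaryGroup (hU : U ∈ unitaryGroup ι α) : U * Uᴴ = 1 :=
  mem_unitaryGroup_iff.1 hU

theorem eq_mul_mul_conjTranspose_of_conjTranspose_mul_mul_eq (hU : U ∈ unitaryGroup ι α)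
    {A D : Matrix ι ι α} (h : Uᴴ * A * U = D) : A = U * D * Uᴴ := by
  rw [← h, ← mul_assoc, ← mul_assoc, mul_conjTranspose_self_of_mem_unitaryGroup hU, one_mul,
    mul_assoc, mul_conjTranspose_self_of_mem_unitaryGroup hU, mul_one]

theorem mul_mul_conjTranspose_sq (hU : U ∈ unitaryGroup ι α) (A : Matrix ι ι α) :
    (U * A * Uᴴ) ^ 2 = U * A ^ 2 * Uᴴ := by
  rw [sq, sq]
  simp only [mul_assoc]
  rw [← mul_assoc Uᴴ U, conjTranspose_mul_self_of_mem_unitaryGroup hU, one_mul]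

theorem inv_mul_mul_conjTranspose (hU : U ∈ unitaryGroup ι α) (A : Matrix ι ι α) :
    (U * A * Uᴴ)⁻¹ = U * A⁻¹ * Uᴴ := by
  have hU_inv : U⁻¹ = Uᴴ := inv_eq_left_inv (conjTranspose_mul_self_of_mem_unitaryGroup hU)
  have hUH_inv : Uᴴ⁻¹ = U := inv_eq_left_inv (mul_conjTranspose_self_of_mem_unitaryGroup hU)
  rw [mul_inv_rev, mul_inv_rev, hU_inv, hUH_inv, mul_assoc]

end Unitary

theorem trace_mul_mul_conjTranspose_mul_mul_mul_conjTranspose {α : Type*} [CommRing α]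
    [StarRing α] (V P A B : Matrix ι ι α) :
    (V * A * Vᴴ * (P * B * Pᴴ)).trace = (A * (Vᴴ * P * B * (Vᴴ * P)ᴴ)).trace := by
  rw [conjTranspose_mul, conjTranspose_conjTranspose]
  simp only [mul_assoc]
  rw [trace_mul_comm V]
  simp only [mul_assoc]

variable [DecidableEq ι]

theorem inv_diagonal_of_ne_zero {K : Type*} [Field K] {v : ι → K} (hv : ∀ i, v i ≠ 0) :
    (diagonal v)⁻¹ = diagonal v⁻¹ := by
  refine inv_eq_right_inv ?_
  rw [diagonal_mul_diagonal, ← diagonal_one]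
  exact congrArg diagonal (funext fun i => mul_inv_cancel₀ (hv i))

theorem PosDef.pos_of_conjTranspose_mul_mul_eq_diagonal {A U : Matrix ι ι ℂ} (hA : A.PosDef)
    (hU : U ∈ unitaryGroup ι ℂ) {d : ι → ℝ} (h : Uᴴ * A * U = diagonal fun i => (d i : ℂ))
    (i : ι) : 0 < d i := by
  have hconj : (Uᴴ * A * U).PosDef :=
    hA.conjTranspose_mul_mul_same (mulVec_injective_of_isUnit (Unitary.isUnit_coe (U := ⟨U, hU⟩)))
  rw [h, posDef_diagonal_iff] at hconj
  exact_mod_cast hconj i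

theorem dotProduct_le_dotProduct_mulVec_of_mem_doublyStochastic {a b : ι → ℝ}
    (hab : Antivary a b) {B : Matrix ι ι ℝ} (hB : B ∈ doublyStochastic ℝ ι) :
    a ⬝ᵥ b ≤ a ⬝ᵥ (B *ᵥ b) := by
  have hlin : IsLinearMap ℝ fun M : Matrix ι ι ℝ => a ⬝ᵥ (M *ᵥ b) :=
    ⟨fun M N => by simp only [add_mulVec, dotProduct_add],
      fun c M => by simp only [smul_mulVec, dotProduct_smul]⟩
  rw [← SetLike.mem_coe, doublyStochastic_eq_convexHull_permMatrix] at hB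
  refine convexHull_min ?_ (convex_halfSpace_ge hlin (a ⬝ᵥ b)) hB
  rintro _ ⟨π, rfl⟩
  simpa [permMatrix_mulVec, dotProduct] using hab.sum_smul_le_sum_smul_comp_perm (σ := π)

theorem sum_normSq_apply_eq_one_of_mem_unitaryGroup {Q : Matrix ι ι ℂ}
    (hQ : Q ∈ unitaryGroup ι ℂ) (i : ι) : ∑ j, Complex.normSq (Q i j) = 1 := by
  have h := congr_fun (congr_fun (mul_conjTranspose_self_of_mem_unitaryGroup hQ) i) i
  simp only [mul_apply, conjTranspose_apply, Complex.star_def, Complex.mul_conj,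
    one_apply_eq] at h
  exact_mod_cast h

theorem map_normSq_mem_doublyStochastic {Q : Matrix ι ι ℂ} (hQ : Q ∈ unitaryGroup ι ℂ) :
    Q.map Complex.normSq ∈ doublyStochastic ℝ ι := by
  refine mem_doublyStochastic_iff_sum.2
    ⟨fun i j => Complex.normSq_nonneg _, sum_normSq_apply_eq_one_of_mem_unitaryGroup hQ, ?_⟩
  intro j
  simpa [Complex.star_def, Complex.normSq_conj] using
    sum_normSq_apply_eq_one_of_mem_unitaryGroup (conjTranspose_mem_unitaryGroup hQ) j

theorem trace_diagonal_mul_mul_diagonal_mul_conjTranspose (a b : ι → ℝ) (Q : Matrix ι ι ℂ) :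
    (diagonal (fun i => (a i : ℂ)) * (Q * diagonal (fun i => (b i : ℂ)) * Qᴴ)).trace
      = ((a ⬝ᵥ (Q.map Complex.normSq *ᵥ b) : ℝ) : ℂ) := by
  have hdiag (i : ι) : (Q * diagonal (fun j => (b j : ℂ)) * Qᴴ) i i
      = ((Q.map Complex.normSq *ᵥ b) i : ℂ) := by
    rw [mul_apply]
    simp [mul_diagonal, mulVec, dotProduct, ← Complex.mul_conj, mul_right_comm]
  simp [trace, diagonal_mul, hdiag, dotProduct]

theorem dotProduct_le_re_trace_diagonal_mul_mul_diagonal_mul_conjTranspose {a b : ι → ℝ}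
    (hab : Antivary a b) {Q : Matrix ι ι ℂ} (hQ : Q ∈ unitaryGroup ι ℂ) :
    a ⬝ᵥ b ≤
      (diagonal (fun i => (a i : ℂ)) * (Q * diagonal (fun i => (b i : ℂ)) * Qᴴ)).trace.re := by
  rw [trace_diagonal_mul_mul_diagonal_mul_conjTranspose, Complex.ofReal_re]
  exact dotProduct_le_dotProduct_mulVec_of_mem_doublyStochastic hab
    (map_normSq_mem_doublyStochastic hQ)

theorem trace_sq_mul_inv_conjTranspose_mul_mul_eq {ρ σ U V W : Matrix ι ι ℂ} {r d : ι → ℝ}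
    (hd : ∀ i, d i ≠ 0) (hU : U ∈ unitaryGroup ι ℂ) (hV : V ∈ unitaryGroup ι ℂ)
    (hW : W ∈ unitaryGroup ι ℂ) (hVρ : Vᴴ * ρ * V = diagonal fun i => (r i : ℂ))
    (hWσ : Wᴴ * σ * W = diagonal fun i => (d i : ℂ)) :
    (ρ ^ 2 * (Uᴴ * σ * U)⁻¹).trace
      = (diagonal (fun i => ((r i ^ 2 : ℝ) : ℂ)) * (Vᴴ * (Uᴴ * W)
          * diagonal (fun i => (((d i)⁻¹ : ℝ) : ℂ)) * (Vᴴ * (Uᴴ * W))ᴴ)).trace := by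
  have hUW : Uᴴ * W ∈ unitaryGroup ι ℂ := mul_mem (conjTranspose_mem_unitaryGroup hU) hW
  have hσU : Uᴴ * σ * U = Uᴴ * W * diagonal (fun i => (d i : ℂ)) * (Uᴴ * W)ᴴ := by
    rw [eq_mul_mul_conjTranspose_of_conjTranspose_mul_mul_eq hW hWσ, conjTranspose_mul,
      conjTranspose_conjTranspose]
    simp only [mul_assoc]
  rw [hσU, inv_mul_mul_conjTranspose hUW,
    inv_diagonal_of_ne_zero fun i => Complex.ofReal_ne_zero.2 (hd i),
    eq_mul_mul_conjTranspose_of_conjTranspose_mul_mul_eq hV hVρ, mul_mul_conjTranspose_sq hV,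
    trace_mul_mul_conjTranspose_mul_mul_mul_conjTranspose, diagonal_pow]
  simp only [Pi.pow_def, Pi.inv_def, Complex.ofReal_pow, Complex.ofReal_inv]

end Matrix

theorem stmt0_general (n : ℕ)
    (ρ σ : Matrix (Fin n) (Fin n) ℂ)
    (hρ : ρ.PosDef) (hσ : σ.PosDef)
    (r d : Fin n → ℝ) (hr : Antitone r) (hd : Antitone d)
    (V W : Matrix (Fin n) (Fin n) ℂ)
    (hV : V ∈ Matrix.unitaryGroup (Fin n) ℂ)
    (hW : W ∈ Matrix.unitaryGroup (Fin n) ℂ)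
    (hVρ : Vᴴ * ρ * V = Matrix.diagonal (fun i => (r i : ℂ)))
    (hWσ : Wᴴ * σ * W = Matrix.diagonal (fun i => (d i : ℂ))) :
    (∀ U ∈ Matrix.unitaryGroup (Fin n) ℂ,
        (∑ i, r i ^ 2 / d i) ≤ ((ρ ^ 2 * (Uᴴ * σ * U)⁻¹).trace).re) ∧
    (ρ ^ 2 * ((W * Vᴴ)ᴴ * σ * (W * Vᴴ))⁻¹).trace = ((∑ i, r i ^ 2 / d i : ℝ) : ℂ) := by
  have hr_pos := hρ.pos_of_conjTranspose_mul_mul_eq_diagonal hV hVρ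
  have hd_pos := hσ.pos_of_conjTranspose_mul_mul_eq_diagonal hW hWσ
  have key (U) (hU : U ∈ unitaryGroup (Fin n) ℂ) :=
    trace_sq_mul_inv_conjTranspose_mul_mul_eq (fun i => (hd_pos i).ne') hU hV hW hVρ hWσ
  have hsum : ∑ i, r i ^ 2 / d i = (fun i => r i ^ 2) ⬝ᵥ fun i => (d i)⁻¹ := by
    simp only [dotProduct, div_eq_mul_inv]
  refine ⟨fun U hU => ?_, ?_⟩
  · have hanti : Antivary (fun i => r i ^ 2) fun i => (d i)⁻¹ :=
      Antitone.antivary (fun i j hij => pow_le_pow_left₀ (hr_pos j).le (hr hij) 2)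
        fun i j hij => inv_anti₀ (hd_pos j) (hd hij)
    rw [key U hU, hsum]
    exact dotProduct_le_re_trace_diagonal_mul_mul_diagonal_mul_conjTranspose hanti <|
      mul_mem (conjTranspose_mem_unitaryGroup hV) (mul_mem (conjTranspose_mem_unitaryGroup hU) hW)
  · have hQ : Vᴴ * ((W * Vᴴ)ᴴ * W) = 1 := by
      rw [conjTranspose_mul, conjTranspose_conjTranspose, mul_assoc,
        conjTranspose_mul_self_of_mem_unitaryGroup hW, mul_one,
        conjTranspose_mul_self_of_mem_unitaryGroup hV]
    rw [key _ (mul_mem hW (conjTranspose_mem_unitaryGroup hV)), hQ, one_mul, conjTranspose_one,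
      mul_one, diagonal_mul_diagonal, trace_diagonal, hsum]
    simp [dotProduct]

/-- For faithful quantum states `ρ, σ`, with `r = λ↓(ρ)` and `d = λ↓(σ)`
(encoded by unitary diagonalizations with antitone diagonals), for every unitary `U`,
`Tr(ρ² (U*σU)⁻¹) ≥ Σᵢ r i ^ 2 / d i`, with equality at `U = W↓ V↓*`; hence this
value is the minimum over the unitary group, attained at `W↓ V↓*`. -/
theorem stmt0 (n : ℕ) (hn : 0 < n)
    (ρ σ : Matrix (Fin n) (Fin n) ℂ)
    (hρ : ρ.PosDef) (hσ : σ.PosDef)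
    (hρtr : ρ.trace = 1) (hσtr : σ.trace = 1)
    (r d : Fin n → ℝ) (hr : Antitone r) (hd : Antitone d)
    (V W : Matrix (Fin n) (Fin n) ℂ)
    (hV : V ∈ Matrix.unitaryGroup (Fin n) ℂ)
    (hW : W ∈ Matrix.unitaryGroup (Fin n) ℂ)
    (hVρ : Vᴴ * ρ * V = Matrix.diagonal (fun i => (r i : ℂ)))
    (hWσ : Wᴴ * σ * W = Matrix.diagonal (fun i => (d i : ℂ))) :
    (∀ U ∈ Matrix.unitaryGroup (Fin n) ℂ,
        (∑ i, r i ^ 2 / d i) ≤ ((ρ ^ 2 * (Uᴴ * σ * U)⁻¹).trace).re) ∧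
    (ρ ^ 2 * ((W * Vᴴ)ᴴ * σ * (W * Vᴴ))⁻¹).trace = ((∑ i, r i ^ 2 / d i : ℝ) : ℂ) :=
  stmt0_general n ρ σ hρ hσ r d hr hd V W hV hW hVρ hWσ
end

section
/- Let s > 0 and define f(d, r) = d·r² / (d·r + s) for d, r > 0. Then for all real numbers d₁ ≥ d₂ > 0 and r₁ ≥ r₂ > 0 one has f(d₁, r₁) + f(d₂, r₂) ≥ f(d₁, r₂) + f(d₂, r₁), and the inequality is strict whenever d₁ > d₂ and r₁ > r₂. -/
lemma stmt13_aux (s : ℝ) (hs : 0 < s) (d₁ d₂ r₁ r₂ : ℝ)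
    (hd₂ : 0 < d₂) (hd : d₂ ≤ d₁) (hr₂ : 0 < r₂) (hr : r₂ ≤ r₁) :
    d₁ * r₂ ^ 2 / (d₁ * r₂ + s) + d₂ * r₁ ^ 2 / (d₂ * r₁ + s) +
      s ^ 2 * (r₁ - r₂) * (d₁ - d₂) * ((d₁ + d₂) * r₁ * r₂ + s * (r₁ + r₂)) /
        ((d₁ * r₁ + s) * (d₁ * r₂ + s) * (d₂ * r₁ + s) * (d₂ * r₂ + s)) =
      d₁ * r₁ ^ 2 / (d₁ * r₁ + s) + d₂ * r₂ ^ 2 / (d₂ * r₂ + s) := by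
  have hd₁ : 0 < d₁ := lt_of_lt_of_le hd₂ hd
  have hr₁ : 0 < r₁ := lt_of_lt_of_le hr₂ hr
  have h11 : d₁ * r₁ + s > 0 := by positivity
  have h12 : d₁ * r₂ + s > 0 := by positivity
  have h21 : d₂ * r₁ + s > 0 := by positivity
  have h22 : d₂ * r₂ + s > 0 := by positivity
  field_simp
  ring

/-- supermodularity of `f(d, r) = d r² / (d r + s)` on `(0,∞)²`:
`f(d₁,r₁) + f(d₂,r₂) ≥ f(d₁,r₂) + f(d₂,r₁)` for `d₁ ≥ d₂ > 0`, `r₁ ≥ r₂ > 0`,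
with strict inequality if `d₁ > d₂` and `r₁ > r₂`. -/
theorem stmt13 (s : ℝ) (hs : 0 < s)
    (f : ℝ → ℝ → ℝ) (hf : ∀ d r, 0 < d → 0 < r → f d r = d * r ^ 2 / (d * r + s))
    (d₁ d₂ r₁ r₂ : ℝ) (hd₂ : 0 < d₂) (hd : d₂ ≤ d₁) (hr₂ : 0 < r₂) (hr : r₂ ≤ r₁) :
    f d₁ r₂ + f d₂ r₁ ≤ f d₁ r₁ + f d₂ r₂ ∧
    (d₂ < d₁ → r₂ < r₁ → f d₁ r₂ + f d₂ r₁ < f d₁ r₁ + f d₂ r₂) := by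
  have hd₁ : 0 < d₁ := lt_of_lt_of_le hd₂ hd
  have hr₁ : 0 < r₁ := lt_of_lt_of_le hr₂ hr
  rw [hf d₁ r₁ hd₁ hr₁, hf d₁ r₂ hd₁ hr₂, hf d₂ r₁ hd₂ hr₁, hf d₂ r₂ hd₂ hr₂]
  have key := stmt13_aux s hs d₁ d₂ r₁ r₂ hd₂ hd hr₂ hr
  have hden : 0 < (d₁ * r₁ + s) * (d₁ * r₂ + s) * (d₂ * r₁ + s) * (d₂ * r₂ + s) := by
    positivity
  constructor
  · rw [← key]
    have : 0 ≤ s ^ 2 * (r₁ - r₂) * (d₁ - d₂) * ((d₁ + d₂) * r₁ * r₂ + s * (r₁ + r₂)) /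
        ((d₁ * r₁ + s) * (d₁ * r₂ + s) * (d₂ * r₁ + s) * (d₂ * r₂ + s)) := by
      apply div_nonneg _ hden.le
      have h1 : 0 ≤ r₁ - r₂ := by linarith
      have h2 : 0 ≤ d₁ - d₂ := by linarith
      have h3 : 0 < (d₁ + d₂) * r₁ * r₂ + s * (r₁ + r₂) := by positivity
      positivity
    linarith
  · intro hdd hrr
    rw [← key]
    have : 0 < s ^ 2 * (r₁ - r₂) * (d₁ - d₂) * ((d₁ + d₂) * r₁ * r₂ + s * (r₁ + r₂)) /
        ((d₁ * r₁ + s) * (d₁ * r₂ + s) * (d₂ * r₁ + s) * (d₂ * r₂ + s)) := by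
      apply div_pos _ hden
      have h1 : 0 < r₁ - r₂ := by linarith
      have h2 : 0 < d₁ - d₂ := by linarith
      have h3 : 0 < (d₁ + d₂) * r₁ * r₂ + s * (r₁ + r₂) := by positivity
      positivity
    linarith
end

section
/- Let n be a positive integer, let s > 0, and let r₁ ≥ r₂ ≥ … ≥ rₙ > 0 and d₁ ≥ d₂ ≥ … ≥ dₙ > 0 be real numbers. Then for every permutation π of {1, …, n}: Σ_{i=1}^n d_{n+1−i} r_i² / (d_{n+1−i} r_i + s) ≤ Σ_{i=1}^n d_{π(i)} r_i² / (d_{π(i)} r_i + s) ≤ Σ_{i=1}^n d_i r_i² / (d_i r_i + s). -/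
/-!
Exchanging the values of a permutation at two positions changes the sum in only two terms, and
the supermodularity inequality `F a v + F b u ≤ F a u + F b v` (`a ≤ b`, `u ≤ v`) says that
sorting those two values into the same order as their positions does not decrease it. Repeatedly
moving the largest displaced position to its place reaches the identity, so the identity pairing
maximizes the sum; in the order dual, the reversed pairing minimizes it. The function
`f(d, r) = d r² / (d r + s)` is supermodular on the positive quadrant because
`f(x,p) + f(y,q) - f(x,q) - f(y,p) = s²(x-y)(p-q)(pq(x+y) + s(p+q)) / ∏ (denominators)`.
-/

open Finset Equiv

lemma mul_sq_div_mul_add_supermodular {s x y p q : ℝ} (hs : 0 ≤ s) (hy : 0 < y) (hyx : y ≤ x)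
    (hq : 0 < q) (hqp : q ≤ p) :
    x * q ^ 2 / (x * q + s) + y * p ^ 2 / (y * p + s) ≤
      x * p ^ 2 / (x * p + s) + y * q ^ 2 / (y * q + s) := by
  have hx : 0 < x := hy.trans_le hyx
  have hp : 0 < p := hq.trans_le hqp
  have hdiff : (x * p ^ 2 / (x * p + s) + y * q ^ 2 / (y * q + s)) -
      (x * q ^ 2 / (x * q + s) + y * p ^ 2 / (y * p + s)) =
        s ^ 2 * (x - y) * (p - q) * (p * q * (x + y) + s * (p + q)) /
          ((x * p + s) * (y * p + s) * (x * q + s) * (y * q + s)) := by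
    field_simp
    ring
  have hxy := sub_nonneg.2 hyx
  have hpq := sub_nonneg.2 hqp
  have : 0 ≤ (x * p ^ 2 / (x * p + s) + y * q ^ 2 / (y * q + s)) -
      (x * q ^ 2 / (x * q + s) + y * p ^ 2 / (y * p + s)) := by
    rw [hdiff]; positivity
  linarith

section Rearrangement

variable {ι α : Type*} [Fintype ι] [AddCommMonoid α] [PartialOrder α] [IsOrderedAddMonoid α]

lemma sum_le_sum_of_pair_le_of_eq_off [DecidableEq ι] {g h : ι → α} {x y : ι} (hxy : x ≠ y)
    (hpair : g x + g y ≤ h x + h y) (hoff : ∀ k, k ≠ x → k ≠ y → g k = h k) :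
    ∑ k, g k ≤ ∑ k, h k := by
  rw [← sum_add_sum_compl {x, y} g, ← sum_add_sum_compl {x, y} h, sum_pair hxy, sum_pair hxy]
  refine add_le_add hpair (sum_congr rfl fun k hk => ?_).le
  simp only [mem_compl, mem_insert, mem_singleton, not_or] at hk
  exact hoff k hk.1 hk.2

variable [LinearOrder ι]

theorem sum_comp_perm_le_sum_of_supermodular (F : ι → ι → α)
    (hF : ∀ a b u v, a ≤ b → u ≤ v → F a v + F b u ≤ F a u + F b v) (π : Perm ι) :
    ∑ i, F (π i) i ≤ ∑ i, F i i := by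
  induction hc : #π.support using Nat.strong_induction_on generalizing π with
  | _ c ih =>
    obtain rfl | hπ := eq_or_ne π 1
    · simp
    have hne : π.support.Nonempty :=
      nonempty_iff_ne_empty.2 (mt Perm.support_eq_empty_iff.1 hπ)
    set x := π.support.max' hne
    have hx : x ∈ π.support := π.support.max'_mem hne
    have hπx : π x ≠ x := Perm.mem_support.1 hx
    set y := π.symm x
    have hπy : π y = x := π.apply_symm_apply x
    have hyx : y ≠ x := fun h => hπx (h ▸ hπy)
    have hy : y ∈ π.support := Perm.mem_support.2 (hπy ▸ hyx.symm)
    have hπx_le : π x ≤ x := π.support.le_max' _ (Perm.apply_mem_support.2 hx)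
    have hy_le : y ≤ x := π.support.le_max' _ hy
    -- `σ` puts the value `x` back at position `x` and `π x` at position `y`
    set σ := swap x (π x) * π
    have hσ : ∑ i, F (σ i) i ≤ ∑ i, F i i :=
      ih _ (hc ▸ Perm.card_support_swap_mul hπx) σ rfl
    refine le_trans (sum_le_sum_of_pair_le_of_eq_off hyx.symm ?_ fun k hkx hky => ?_) hσ
    · simp only [σ, Perm.mul_apply, hπy, swap_apply_left, swap_apply_right]
      exact (hF _ _ _ _ hπx_le hy_le).trans_eq (add_comm _ _)
    · have hπk : π k ≠ π y := fun h => hky (π.injective h)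
      rw [hπy] at hπk
      simp only [σ, Perm.mul_apply]
      rw [swap_apply_of_ne_of_ne hπk (fun h => hkx (π.injective h))]

theorem sum_le_sum_comp_perm_of_submodular (F : ι → ι → α)
    (hF : ∀ a b u v, a ≤ b → u ≤ v → F a u + F b v ≤ F a v + F b u) (π : Perm ι) :
    ∑ i, F i i ≤ ∑ i, F (π i) i :=
  sum_comp_perm_le_sum_of_supermodular (α := αᵒᵈ) F hF π

end Rearrangement

theorem stmt16_general (n : ℕ) (s : ℝ) (hs : 0 < s)
    (r d : Fin n → ℝ) (hr : Antitone r) (hd : Antitone d)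
    (hrpos : ∀ i, 0 < r i) (hdpos : ∀ i, 0 < d i)
    (π : Equiv.Perm (Fin n)) :
    (∑ i, d i.rev * r i ^ 2 / (d i.rev * r i + s)) ≤
        (∑ i, d (π i) * r i ^ 2 / (d (π i) * r i + s)) ∧
    (∑ i, d (π i) * r i ^ 2 / (d (π i) * r i + s)) ≤
        ∑ i, d i * r i ^ 2 / (d i * r i + s) := by
  have hF : ∀ a b u v : Fin n, a ≤ b → u ≤ v →
      d a * r v ^ 2 / (d a * r v + s) + d b * r u ^ 2 / (d b * r u + s) ≤
        d a * r u ^ 2 / (d a * r u + s) + d b * r v ^ 2 / (d b * r v + s) :=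
    fun a b u v hab huv =>
      mul_sq_div_mul_add_supermodular hs.le (hdpos b) (hd hab) (hrpos v) (hr huv)
  refine ⟨?_, sum_comp_perm_le_sum_of_supermodular _ hF π⟩
  -- pairing `d ∘ rev` with `r` is submodular, and `rev ∘ π` recovers the pairing by `π`
  have hrev := sum_le_sum_comp_perm_of_submodular
    (fun j i => d j.rev * r i ^ 2 / (d j.rev * r i + s))
    (fun a b u v hab huv => by linarith [hF _ _ _ _ (Fin.rev_le_rev.2 hab) huv])
    (Fin.revPerm * π)
  simpa only [Perm.mul_apply, Fin.revPerm_apply, Fin.rev_rev] using hrev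

/-- rearrangement principle for `f(d, r) = d r²/(d r + s)`:
for nonincreasing positive sequences `r, d` and any permutation `π`,
`Σᵢ d_{rev i} rᵢ²/(d_{rev i} rᵢ + s) ≤ Σᵢ d_{π i} rᵢ²/(d_{π i} rᵢ + s)
  ≤ Σᵢ dᵢ rᵢ²/(dᵢ rᵢ + s)`. -/
theorem stmt16 (n : ℕ) (hn : 0 < n) (s : ℝ) (hs : 0 < s)
    (r d : Fin n → ℝ) (hr : Antitone r) (hd : Antitone d)
    (hrpos : ∀ i, 0 < r i) (hdpos : ∀ i, 0 < d i)
    (π : Equiv.Perm (Fin n)) :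
    (∑ i, d i.rev * r i ^ 2 / (d i.rev * r i + s)) ≤
        (∑ i, d (π i) * r i ^ 2 / (d (π i) * r i + s)) ∧
    (∑ i, d (π i) * r i ^ 2 / (d (π i) * r i + s)) ≤
        ∑ i, d i * r i ^ 2 / (d i * r i + s) :=
  stmt16_general n s hs r d hr hd hrpos hdpos π
end
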